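/- Let N ≥ 2 and for q > N set C(q) = ω_{N−1}^{1−N/q} (Γ(q/(q−N)) Γ(N(q−1)/(q−N)) / Γ(Nq/(q−N)))^{1−N/q} (q(N−1)/N)^{N/q}. Then lim_{q → N⁺} C(q) = ((N−1)/N)^N. -/

import Mathlib

/-!
Write `ε = q - N` and `s t = t log t - t`. Then `1 - N/q = ε/q` and the three Gamma arguments are
`q/ε`, `N(q-1)/ε` and `Nq/ε`. Sandwiching `Γ` between factorials and using Stirling's bounds on
`n!` gives `log Γ t = s t + o(t)`, so the `o(t)` errors disappear after multiplication by `ε/q`.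
The scaling identity `ε · s(a/ε) = s a - a log ε`, together with `q + N(q-1) - Nq = ε`, turns
`(ε/q) (s(q/ε) + s(N(q-1)/ε) - s(Nq/ε))` into `(s q + s(N(q-1)) - s(Nq) - ε log ε)/q`, which is
continuous at `q = N` with value `(N-1) log(N-1) - N log N`. The factors `ω^{1-N/q}` and
`(q(N-1)/N)^{N/q}` tend to `1` and `N - 1`.
-/

open Real Filter

/-- Surface area `ω_{N−1}` of the unit sphere `S^{N−1} ⊂ ℝ^N`. -/
noncomputable def sphereArea (N : ℕ) : ℝ :=
  2 * Real.pi ^ ((N : ℝ) / 2) / Real.Gamma ((N : ℝ) / 2)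

/-- The Bliss constant
`C(q) = ω_{N−1}^{1−N/q} (Γ(q/(q−N))Γ(N(q−1)/(q−N))/Γ(Nq/(q−N)))^{1−N/q} (q(N−1)/N)^{N/q}`. -/
noncomputable def blissC (N : ℕ) (q : ℝ) : ℝ :=
  sphereArea N ^ (1 - (N : ℝ) / q) *
    (Real.Gamma (q / (q - N)) * Real.Gamma ((N : ℝ) * (q - 1) / (q - N)) /
      Real.Gamma ((N : ℝ) * q / (q - N))) ^ (1 - (N : ℝ) / q) *
    (q * ((N : ℝ) - 1) / N) ^ ((N : ℝ) / q)

open Set Asymptotics Topology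
open scoped Nat

noncomputable def stirlingMain (t : ℝ) : ℝ := t * log t - t

lemma continuous_stirlingMain : Continuous stirlingMain :=
  continuous_mul_log.sub continuous_id

lemma stirlingMain_sub_le {a b : ℝ} (ha : 0 < a) (hab : a ≤ b) :
    stirlingMain b - stirlingMain a ≤ (b - a) * log b := by
  have hb : 0 < b := ha.trans_le hab
  have h := mul_le_mul_of_nonneg_left (log_le_sub_one_of_pos (div_pos hb ha)) ha.le
  rw [log_div hb.ne' ha.ne', mul_sub_one, mul_div_cancel₀ _ ha.ne'] at h
  unfold stirlingMain
  nlinarith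

lemma le_stirlingMain_sub {a b : ℝ} (ha : 0 < a) (hab : a ≤ b) :
    (b - a) * log a ≤ stirlingMain b - stirlingMain a := by
  have hb : 0 < b := ha.trans_le hab
  have h := mul_le_mul_of_nonneg_left (log_le_sub_one_of_pos (div_pos ha hb)) hb.le
  rw [log_div ha.ne' hb.ne', mul_sub_one, mul_div_cancel₀ _ hb.ne'] at h
  unfold stirlingMain
  nlinarith

lemma stirlingMain_div (a : ℝ) {ε : ℝ} (hε : ε ≠ 0) :
    ε * stirlingMain (a / ε) = stirlingMain a - a * log ε := by
  rcases eq_or_ne a 0 with rfl | ha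
  · simp [stirlingMain]
  unfold stirlingMain
  rw [log_div ha hε]
  field_simp
  ring

lemma log_factorial_le_stirlingMain {n : ℕ} (hn : n ≠ 0) :
    log n ! ≤ stirlingMain n + log n / 2 + 1 := by
  obtain ⟨m, rfl⟩ := Nat.exists_eq_succ_of_ne_zero hn
  have hseq : Stirling.stirlingSeq (m + 1) ≤ exp 1 / √2 := by
    simpa [Stirling.stirlingSeq_one] using Stirling.stirlingSeq'_antitone (Nat.zero_le m)
  have hlog := log_le_log (Stirling.stirlingSeq'_pos m) hseq
  rw [Stirling.log_stirlingSeq_formula, log_div (exp_pos 1).ne' (by positivity), log_exp,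
    log_sqrt zero_le_two, log_div (by positivity) (exp_pos 1).ne', log_exp,
    log_mul two_ne_zero (by positivity)] at hlog
  unfold stirlingMain
  push_cast at hlog ⊢
  linarith

lemma stirlingMain_le_log_factorial {n : ℕ} (hn : n ≠ 0) : stirlingMain n ≤ log n ! := by
  have h := Stirling.le_log_factorial_stirling hn
  have hlogn : 0 ≤ log n := log_natCast_nonneg n
  have hlogpi : 0 ≤ log (2 * π) := log_nonneg (by linarith [pi_gt_three])
  unfold stirlingMain
  linarith

lemma abs_log_Gamma_sub_stirlingMain_le {t : ℝ} (ht : 2 ≤ t) :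
    |log (Gamma t) - stirlingMain t| ≤ 2 * log t + 1 := by
  set n := ⌊t⌋₊
  have hn2_nat : 2 ≤ n := Nat.le_floor (by exact_mod_cast ht)
  have hn2 : (2 : ℝ) ≤ n := by exact_mod_cast hn2_nat
  have hnt : (n : ℝ) ≤ t := Nat.floor_le (by linarith)
  have htn : t ≤ n + 1 := (Nat.lt_floor_add_one t).le
  have hn0 : n ≠ 0 := by omega
  have hGamma_mono := Gamma_strictMonoOn_Ici.monotoneOn
  have hlower : Gamma n ≤ Gamma t :=
    hGamma_mono (mem_Ici.2 hn2) (mem_Ici.2 ht) hnt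
  have hupper : Gamma t ≤ n ! := by
    rw [← Gamma_nat_eq_factorial]
    exact hGamma_mono (mem_Ici.2 ht) (mem_Ici.2 (by linarith)) htn
  have hGamma_n : log (Gamma n) = log n ! - log n := by
    rw [← Gamma_nat_eq_factorial, Gamma_add_one (by positivity),
      log_mul (by positivity) (Gamma_pos_of_pos (by positivity)).ne']
    ring
  have hGn := log_le_log (Gamma_pos_of_pos (by positivity)) hlower
  have hGt := log_le_log (Gamma_pos_of_pos (by positivity)) hupper
  have hs_le := stirlingMain_sub_le (by positivity) hnt
  have hs_ge := le_stirlingMain_sub (by positivity) hnt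
  have hlogn : 0 ≤ log n := log_nonneg (by linarith)
  have hlog_le : log n ≤ log t := log_le_log (by positivity) hnt
  have hlogt : 0 ≤ log t := log_nonneg (by linarith)
  have hfact_le := log_factorial_le_stirlingMain hn0
  have hfact_ge := stirlingMain_le_log_factorial hn0
  rw [abs_le]
  constructor <;> nlinarith

lemma isLittleO_log_Gamma_sub_stirlingMain :
    (fun t => log (Gamma t) - stirlingMain t) =o[atTop] id := by
  have hbound : (fun t => log (Gamma t) - stirlingMain t) =O[atTop] fun t => 2 * log t + 1 := by
    refine IsBigO.of_bound 1 ?_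
    filter_upwards [eventually_ge_atTop 2] with t ht
    have hlogt : 0 ≤ log t := log_nonneg (by linarith)
    rw [one_mul, Real.norm_eq_abs, Real.norm_eq_abs,
      abs_of_nonneg (a := 2 * log t + 1) (by positivity)]
    exact abs_log_Gamma_sub_stirlingMain_le ht
  exact hbound.trans_isLittleO
    ((isLittleO_log_id_atTop.const_mul_left 2).add (isLittleO_const_id_atTop 1))

lemma tendsto_mul_comp_of_isLittleO {α : Type*} {l : Filter α} {f : ℝ → ℝ}
    (hf : f =o[atTop] id) {g h : α → ℝ} {a : ℝ} (hg : Tendsto g l atTop)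
    (hgh : Tendsto (fun x => h x * g x) l (𝓝 a)) :
    Tendsto (fun x => h x * f (g x)) l (𝓝 0) := by
  have hratio : Tendsto (fun x => f (g x) / g x) l (𝓝 0) := hf.tendsto_div_nhds_zero.comp hg
  refine (mul_zero a ▸ hgh.mul hratio).congr' ?_
  filter_upwards [hg.eventually_ne_atTop 0] with x hx
  field_simp

lemma tendsto_div_sub_nhdsGT_atTop {c A : ℝ} (hA : 0 < A) {a : ℝ → ℝ}
    (ha : Tendsto a (𝓝[>] c) (𝓝 A)) : Tendsto (fun q => a q / (q - c)) (𝓝[>] c) atTop := by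
  have hsub : Tendsto (fun q => q - c) (𝓝[>] c) (𝓝[>] 0) := by
    refine tendsto_nhdsWithin_iff.2 ⟨?_, ?_⟩
    · exact ((continuous_sub_right c).tendsto' c 0 (sub_self c)).mono_left nhdsWithin_le_nhds
    · filter_upwards [self_mem_nhdsWithin] with q (hq : c < q) using sub_pos.2 hq
  exact ha.pos_mul_atTop hA (tendsto_inv_nhdsGT_zero.comp hsub)

lemma tendsto_one_sub_div_mul_comp_div_sub {f : ℝ → ℝ} (hf : f =o[atTop] id) {c A : ℝ}
    (hc : c ≠ 0) (hA : 0 < A) {a : ℝ → ℝ} (ha : Tendsto a (𝓝[>] c) (𝓝 A)) :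
    Tendsto (fun q => (1 - c / q) * f (a q / (q - c))) (𝓝[>] c) (𝓝 0) := by
  refine tendsto_mul_comp_of_isLittleO hf (tendsto_div_sub_nhdsGT_atTop hA ha) (a := A / c) ?_
  have hq : Tendsto (fun q : ℝ => q) (𝓝[>] c) (𝓝 c) := tendsto_nhdsWithin_of_tendsto_nhds tendsto_id
  refine (ha.div hq hc).congr' ?_
  filter_upwards [self_mem_nhdsWithin, hq.eventually_ne hc] with q (hcq : c < q) hq0
  have : q - c ≠ 0 := sub_ne_zero.2 hcq.ne'
  simp only [Pi.div_apply]
  field_simp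

theorem tendsto_one_sub_div_mul_log_Gamma_ratio {c : ℝ} (hc : 1 < c) :
    Tendsto (fun q => (1 - c / q) * log (Gamma (q / (q - c)) * Gamma (c * (q - 1) / (q - c)) /
      Gamma (c * q / (q - c)))) (𝓝[>] c) (𝓝 ((c - 1) * log (c - 1) - c * log c)) := by
  have hc0 : 0 < c := by linarith
  set main : ℝ → ℝ := fun q =>
    (stirlingMain q + stirlingMain (c * (q - 1)) - stirlingMain (c * q) - (q - c) * log (q - c)) / q
  have hmain : Tendsto main (𝓝[>] c) (𝓝 ((c - 1) * log (c - 1) - c * log c)) := by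
    have hcont : ContinuousAt main c := by
      refine ContinuousAt.div ?_ continuousAt_id hc0.ne'
      have := continuous_stirlingMain
      have := continuous_mul_log
      fun_prop
    convert hcont.tendsto.mono_left nhdsWithin_le_nhds using 2
    simp only [main, stirlingMain, sub_self, zero_mul, sub_zero]
    rw [log_mul hc0.ne' (by linarith), log_mul hc0.ne' hc0.ne']
    field_simp
    ring
  have hq : Tendsto (fun q : ℝ => q) (𝓝[>] c) (𝓝 c) := tendsto_nhdsWithin_of_tendsto_nhds tendsto_id
  have hr := isLittleO_log_Gamma_sub_stirlingMain
  have hx := tendsto_one_sub_div_mul_comp_div_sub hr hc0.ne' hc0 hq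
  have hy := tendsto_one_sub_div_mul_comp_div_sub hr hc0.ne' (mul_pos hc0 (sub_pos.2 hc))
    ((hq.sub_const 1).const_mul c)
  have hz := tendsto_one_sub_div_mul_comp_div_sub hr hc0.ne' (mul_pos hc0 hc0) (hq.const_mul c)
  have hsum := hmain.add ((hx.add hy).sub hz)
  rw [add_zero, sub_zero, add_zero] at hsum
  refine hsum.congr' ?_
  filter_upwards [self_mem_nhdsWithin] with q (hcq : c < q)
  have hε : 0 < q - c := sub_pos.2 hcq
  have hq0 : 0 < q := hc0.trans hcq
  have hΓ : ∀ t : ℝ, 0 < t → Gamma t ≠ 0 := fun t ht => (Gamma_pos_of_pos ht).ne'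
  have hx0 : 0 < q / (q - c) := div_pos hq0 hε
  have hy0 : 0 < c * (q - 1) / (q - c) := div_pos (mul_pos hc0 (by linarith)) hε
  have hz0 : 0 < c * q / (q - c) := div_pos (mul_pos hc0 hq0) hε
  rw [log_div (mul_ne_zero (hΓ _ hx0) (hΓ _ hy0)) (hΓ _ hz0), log_mul (hΓ _ hx0) (hΓ _ hy0)]
  have hsx := stirlingMain_div q hε.ne'
  have hsy := stirlingMain_div (c * (q - 1)) hε.ne'
  have hsz := stirlingMain_div (c * q) hε.ne'
  simp only [main]
  field_simp
  linear_combination -(hsx + hsy - hsz)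

theorem tendsto_Gamma_ratio_rpow {c : ℝ} (hc : 1 < c) :
    Tendsto (fun q => (Gamma (q / (q - c)) * Gamma (c * (q - 1) / (q - c)) /
      Gamma (c * q / (q - c))) ^ (1 - c / q)) (𝓝[>] c) (𝓝 ((c - 1) ^ (c - 1) / c ^ c)) := by
  have hc0 : 0 < c := by linarith
  rw [rpow_def_of_pos (sub_pos.2 hc), rpow_def_of_pos hc0, ← exp_sub, mul_comm (log (c - 1)),
    mul_comm (log c)]
  refine ((continuous_exp.tendsto _).comp (tendsto_one_sub_div_mul_log_Gamma_ratio hc)).congr' ?_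
  filter_upwards [self_mem_nhdsWithin] with q (hcq : c < q)
  have hε : 0 < q - c := sub_pos.2 hcq
  have hratio : 0 < Gamma (q / (q - c)) * Gamma (c * (q - 1) / (q - c)) / Gamma (c * q / (q - c)) :=
    div_pos (mul_pos (Gamma_pos_of_pos (div_pos (by linarith) hε))
      (Gamma_pos_of_pos (div_pos (by nlinarith) hε))) (Gamma_pos_of_pos (div_pos (by nlinarith) hε))
  rw [Function.comp_apply, rpow_def_of_pos hratio, mul_comm]

/-- `lim_{q → N⁺} C(q) = ((N−1)/N)^N`. -/
theorem stmt18 {N : ℕ} (hN : 2 ≤ N) :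
    Tendsto (fun q => blissC N q) (nhdsWithin (N : ℝ) (Set.Ioi (N : ℝ)))
      (nhds ((((N : ℝ) - 1) / N) ^ N)) := by
  have hN1 : (1 : ℝ) < N := by exact_mod_cast hN
  have hN0 : (N : ℝ) ≠ 0 := by positivity
  have hω : 0 < sphereArea N := div_pos (by positivity) (Gamma_pos_of_pos (by positivity))
  have hq : Tendsto (fun q : ℝ => q) (𝓝[>] (N : ℝ)) (𝓝 N) :=
    tendsto_nhdsWithin_of_tendsto_nhds tendsto_id
  have hexp : Tendsto (fun q : ℝ => (N : ℝ) / q) (𝓝[>] (N : ℝ)) (𝓝 1) :=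
    div_self hN0 ▸ tendsto_const_nhds.div hq hN0
  have hsphere : Tendsto (fun q : ℝ => sphereArea N ^ (1 - (N : ℝ) / q)) (𝓝[>] (N : ℝ)) (𝓝 1) := by
    have h := tendsto_const_nhds.rpow ((tendsto_const_nhds (x := (1 : ℝ))).sub hexp) (Or.inl hω.ne')
    rwa [sub_self, rpow_zero] at h
  have hpow : Tendsto (fun q : ℝ => (q * ((N : ℝ) - 1) / N) ^ ((N : ℝ) / q)) (𝓝[>] (N : ℝ))
      (𝓝 ((N : ℝ) - 1)) := by
    have h := ((hq.mul_const ((N : ℝ) - 1)).div_const (N : ℝ)).rpow hexp (Or.inr one_pos)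
    rwa [rpow_one, mul_div_cancel_left₀ _ hN0] at h
  have h := (hsphere.mul (tendsto_Gamma_ratio_rpow hN1)).mul hpow
  unfold blissC
  convert h using 2
  have hN1' : (N : ℝ) - 1 ≠ 0 := sub_ne_zero.2 hN1.ne'
  rw [one_mul, rpow_sub_one hN1', rpow_natCast, rpow_natCast, div_pow]
  field_simp
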